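/- arXiv:1905.12482 — 9 statements merged into one kernel-verified Lean document; each statement's English description precedes it below -/
import Mathlib

section
/- Let G be a group (pro-p group) and H a subgroup of index p, and f : H → G a homomorphism such that the only subgroup K ≤ H that is normal in G and satisfies f(K) ≤ K is the trivial subgroup (f is a simple virtual endomorphism). If H contains an element of order p, then there exists an element of order p in f(H) that does not lie in H. -/
/-! If `f(H)` had no element of order `p` outside `H`, then `f` would map every element of `H`
of order dividing `p` back into `H`. The subgroup `Ω₁(H)` generated by these elements would then
be `f`-invariant, and it is normal in `G` because `H`, having index `p` in a `p`-group, is. Simplicity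
of `f` forces `Ω₁(H) = 1`, contradicting the existence of an element of order `p` in `H`. -/

namespace Subgroup

variable {G : Type*} [Group G]

theorem normal_closure_of_conj_mem {s : Set G} (hs : ∀ x ∈ s, ∀ g : G, g * x * g⁻¹ ∈ s) :
    (closure s).Normal where
  conj_mem n hn g := by
    have hmap : (closure s).map (MulAut.conj g).toMonoidHom ≤ closure s := by
      rw [MonoidHom.map_closure]
      exact closure_mono (by rintro _ ⟨x, hx, rfl⟩; exact hs x hx g)
    exact hmap ⟨n, hn, rfl⟩

theorem apply_mem_closure_of_apply_mem_closure {H : Subgroup G} (f : H →* G) {s : Set G}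
    (hsH : s ⊆ H) (hfs : ∀ x (hx : x ∈ s), f ⟨x, hsH hx⟩ ∈ closure s)
    {k : G} (hk : k ∈ H) (hks : k ∈ closure s) : f ⟨k, hk⟩ ∈ closure s := by
  have hclosure : closure s = (closure (H.subtype ⁻¹' s)).map H.subtype := by
    rw [MonoidHom.map_closure, Set.image_preimage_eq_of_subset (by simpa using hsH)]
  have hle : closure (H.subtype ⁻¹' s) ≤ (closure s).comap f :=
    (closure_le _).mpr fun x hx => hfs x hx
  rw [hclosure] at hks
  obtain ⟨y, hy, rfl⟩ := hks
  exact hle hy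

/-- `Ω₁(H)` in the notation of `p`-groups, when `n = p`. -/
def omegaOne (H : Subgroup G) (n : ℕ) : Subgroup G :=
  closure {x | x ∈ H ∧ x ^ n = 1}

theorem omegaOne_le (H : Subgroup G) (n : ℕ) : H.omegaOne n ≤ H :=
  (closure_le _).mpr fun _ hx => hx.1

theorem mem_omegaOne_of_pow_eq_one {H : Subgroup G} {n : ℕ} {x : G} (hxH : x ∈ H)
    (hx : x ^ n = 1) : x ∈ H.omegaOne n :=
  subset_closure ⟨hxH, hx⟩

theorem omegaOne_normal (H : Subgroup G) [hH : H.Normal] (n : ℕ) : (H.omegaOne n).Normal :=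
  normal_closure_of_conj_mem fun x hx g =>
    ⟨hH.conj_mem x hx.1 g, by rw [conj_pow, hx.2, mul_one, mul_inv_cancel]⟩

theorem apply_mem_omegaOne {p : ℕ} (hp : p.Prime) {H : Subgroup G} (f : H →* G)
    (hf : ∀ g ∈ f.range, orderOf g = p → g ∈ H) {k : G} (hk : k ∈ H)
    (hkΩ : k ∈ H.omegaOne p) : f ⟨k, hk⟩ ∈ H.omegaOne p := by
  refine apply_mem_closure_of_apply_mem_closure f (fun _ hx => hx.1) (fun x hx => ?_) hk hkΩ
  have hpow : f ⟨x, hx.1⟩ ^ p = 1 := by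
    rw [← map_pow, show (⟨x, hx.1⟩ : H) ^ p = 1 by simpa using hx.2, map_one]
  refine mem_omegaOne_of_pow_eq_one ?_ hpow
  rcases hp.eq_one_or_self_of_dvd _ (orderOf_dvd_of_pow_eq_one hpow) with h1 | hP
  · rw [orderOf_eq_one_iff.mp h1]
    exact H.one_mem
  · exact hf _ ⟨_, rfl⟩ hP

end Subgroup

theorem IsPGroup.normal_of_index_eq {p : ℕ} [Fact p.Prime] {G : Type*} [Group G] [Finite G]
    (hG : IsPGroup p G) {H : Subgroup G} (hH : H.index = p) : H.Normal := by
  obtain ⟨n, hn⟩ := hG.exists_card_eq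
  have hn0 : n ≠ 0 := by
    rintro rfl
    have hdvd := H.index_dvd_card
    rw [hH, hn, pow_zero] at hdvd
    exact (Fact.out : p.Prime).ne_one (Nat.eq_one_of_dvd_one hdvd)
  exact Subgroup.normal_of_index_eq_minFac_card (by rw [hn, Nat.Prime.pow_minFac Fact.out hn0, hH])

/-- Lemma 2.4, first part: if `f : H → G` is a simple virtual
endomorphism of degree `p` of a (pro-)`p` group `G` and `H` contains an element
of order `p`, then `f(H) \ H` contains an element of order `p`. -/
theorem stmt0 (p : ℕ) (hp : p.Prime) (G : Type*) [Group G] [Finite G]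
    (hG : IsPGroup p G) (H : Subgroup G) (hidx : H.index = p) (f : H →* G)
    (hsimple : ∀ K : Subgroup G, K ≤ H → K.Normal →
      (∀ k (hk : k ∈ H), k ∈ K → f ⟨k, hk⟩ ∈ K) → K = ⊥)
    (hord : ∃ h : H, orderOf (h : G) = p) :
    ∃ g ∈ f.range, orderOf g = p ∧ g ∉ H := by
  by_contra! hcon
  have := Fact.mk hp
  have := hG.normal_of_index_eq hidx
  have hΩ : H.omegaOne p = ⊥ := hsimple _ (H.omegaOne_le p) (H.omegaOne_normal p)
    fun _ hk hkΩ => Subgroup.apply_mem_omegaOne hp f hcon hk hkΩ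
  obtain ⟨h, hh⟩ := hord
  have hmem : (h : G) ∈ H.omegaOne p :=
    Subgroup.mem_omegaOne_of_pow_eq_one h.2 (hh ▸ pow_orderOf_eq_one _)
  rw [hΩ, Subgroup.mem_bot] at hmem
  rw [hmem, orderOf_one] at hh
  exact hp.ne_one hh.symm
end

section
/- Let G be a group, H a subgroup of index p, and f : H → G a simple virtual endomorphism such that H contains an element of order p. Then G splits as G = H ⋊ ⟨a⟩ for some element a ∈ G of order p. -/
/-!
If every element of order `p` lay in `H`, the subgroup generated by all `g` with `g ^ p = 1`
would be a nontrivial normal subgroup of `H` (it contains the given element of order `p`)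
that `f` maps into itself, contradicting simplicity. So some `a ∉ H` has order `p`; then
`⟨a⟩ ∩ H` is trivial because `⟨a⟩` has prime order, and `H ⊔ ⟨a⟩ = G` because `H` has prime
index.
-/

open Subgroup

section

variable {G : Type*} [Group G]

theorem Subgroup.normal_closure_setOf_pow_eq_one (n : ℕ) :
    (closure {g : G | g ^ n = 1}).Normal := by
  refine normalizer_eq_top_iff.mp (top_le_iff.mp (le_normalizer_closure_iff.mpr ?_))
  intro h _ g hg
  apply subset_closure
  simp_all [conj_pow]

theorem Subgroup.map_mem_closure_of_subset {H : Subgroup G} (f : H →* G) {s : Set G}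
    (hsH : s ⊆ H) (hf : ∀ x (hx : x ∈ H), x ∈ s → f ⟨x, hx⟩ ∈ closure s) :
    ∀ k (hk : k ∈ H), k ∈ closure s → f ⟨k, hk⟩ ∈ closure s := by
  have hclosure : closure (H.subtype ⁻¹' s) ≤ (closure s).comap f :=
    closure_le _ |>.mpr fun x hx => hf x x.2 hx
  intro k hk hks
  rw [← Set.image_preimage_eq_of_subset (f := H.subtype) (s := s) (by simpa using hsH),
    ← MonoidHom.map_closure] at hks
  obtain ⟨y, hy, rfl⟩ := hks
  exact hclosure hy

theorem Subgroup.sup_eq_top_of_index_prime {H K : Subgroup G} (hH : H.index.Prime)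
    (hK : ¬K ≤ H) : H ⊔ K = ⊤ := by
  rcases hH.eq_one_or_self_of_dvd _ (index_dvd_of_le (le_sup_left : H ≤ H ⊔ K)) with h | h
  · exact index_eq_one.mp h
  · have hrel : H.relIndex (H ⊔ K) = 1 := by
      have := relIndex_mul_index (le_sup_left : H ≤ H ⊔ K)
      rw [h] at this
      exact (Nat.mul_eq_right hH.ne_zero).mp this
    exact absurd (le_sup_right.trans (relIndex_eq_one.mp hrel)) hK

theorem Subgroup.inf_zpowers_eq_bot_of_orderOf_prime {H : Subgroup G} {a : G}
    (ha : (orderOf a).Prime) (haH : a ∉ H) : H ⊓ zpowers a = ⊥ := by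
  have : Finite (zpowers a) := Nat.finite_of_card_ne_zero (by simpa using ha.ne_zero)
  have hdvd : Nat.card ↥(H ⊓ zpowers a) ∣ orderOf a :=
    Nat.card_zpowers a ▸ card_dvd_of_le inf_le_right
  rcases (Nat.dvd_prime ha).mp hdvd with h | h
  · exact card_eq_one.mp h
  · have heq : H ⊓ zpowers a = zpowers a :=
      eq_of_le_of_card_ge inf_le_right (by rw [h, Nat.card_zpowers])
    have : a ∈ H ⊓ zpowers a := by rw [heq]; exact mem_zpowers a
    exact absurd this.1 haH

theorem exists_orderOf_eq_notMem_of_simple {p : ℕ} (hp : p.Prime) {H : Subgroup G}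
    (f : H →* G)
    (hsimple : ∀ K : Subgroup G, K ≤ H → K.Normal →
      (∀ k (hk : k ∈ H), k ∈ K → f ⟨k, hk⟩ ∈ K) → K = ⊥)
    (hord : ∃ h : H, orderOf (h : G) = p) :
    ∃ a : G, orderOf a = p ∧ a ∉ H := by
  by_contra! hcon
  set s := {g : G | g ^ p = 1}
  have hsH : s ⊆ H := fun g hg => by
    rcases (Nat.dvd_prime hp).mp (orderOf_dvd_of_pow_eq_one hg) with h1 | hgp
    · rw [orderOf_eq_one_iff.mp h1]
      exact H.one_mem
    · exact hcon g hgp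
  have hinv : ∀ k (hk : k ∈ H), k ∈ closure s → f ⟨k, hk⟩ ∈ closure s :=
    map_mem_closure_of_subset f hsH fun x hx hxs =>
      Subgroup.subset_closure <| show f ⟨x, hx⟩ ^ p = 1 by
        rw [← map_pow, show (⟨x, hx⟩ : H) ^ p = 1 from Subtype.ext hxs, map_one]
  have hbot : closure s = ⊥ :=
    hsimple _ ((closure_le H).mpr hsH) (normal_closure_setOf_pow_eq_one p) hinv
  obtain ⟨h, hh⟩ := hord
  have hmem : (h : G) ∈ closure s :=
    Subgroup.subset_closure (show (h : G) ^ p = 1 from hh ▸ pow_orderOf_eq_one (h : G))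
  rw [hbot, mem_bot] at hmem
  exact hp.one_lt.ne' (by rw [← hh, hmem, orderOf_one])

end

theorem stmt1_general (p : ℕ) (hp : p.Prime) (G : Type*) [Group G]
    (H : Subgroup G) (hidx : H.index = p) (f : H →* G)
    (hsimple : ∀ K : Subgroup G, K ≤ H → K.Normal →
      (∀ k (hk : k ∈ H), k ∈ K → f ⟨k, hk⟩ ∈ K) → K = ⊥)
    (hord : ∃ h : H, orderOf (h : G) = p) :
    ∃ a : G, orderOf a = p ∧ H ⊓ Subgroup.zpowers a = ⊥ ∧
      H ⊔ Subgroup.zpowers a = ⊤ := by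
  obtain ⟨a, ha, haH⟩ := exists_orderOf_eq_notMem_of_simple hp f hsimple hord
  exact ⟨a, ha, inf_zpowers_eq_bot_of_orderOf_prime (ha ▸ hp) haH,
    sup_eq_top_of_index_prime (hidx ▸ hp) (zpowers_le.not.mpr haH)⟩

/-- Lemma 2.4: if `f : H → G` is a simple virtual endomorphism of
degree `p` of a finite `p`-group `G` and `H` contains an element of order `p`,
then `G = H ⋊ ⟨a⟩` for some element `a` of order `p`. -/
theorem stmt1 (p : ℕ) (hp : p.Prime) (G : Type*) [Group G] [Finite G]
    (hG : IsPGroup p G) (H : Subgroup G) (hidx : H.index = p) (f : H →* G)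
    (hsimple : ∀ K : Subgroup G, K ≤ H → K.Normal →
      (∀ k (hk : k ∈ H), k ∈ K → f ⟨k, hk⟩ ∈ K) → K = ⊥)
    (hord : ∃ h : H, orderOf (h : G) = p) :
    ∃ a : G, orderOf a = p ∧ H ⊓ Subgroup.zpowers a = ⊥ ∧
      H ⊔ Subgroup.zpowers a = ⊤ :=
  stmt1_general p hp G H hidx f hsimple hord
end

section
/- Let G be a pro-p group and f : H → G a simple virtual endomorphism of degree p, and suppose there is an element a of order p in f(H) \ H. Then the restriction of f to H ∩ f(H), viewed as a homomorphism H ∩ f(H) → f(H), is a simple virtual endomorphism of f(H) of degree p; that is, [f(H) : H ∩ f(H)] = p and the only subgroup K of H ∩ f(H) that is normal in f(H) and satisfies f(K) ≤ K is trivial. -/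
/-!
The cyclic group `T = ⟨a⟩` has prime order `p` and is not contained in `H`, so it meets `H`
trivially; as `|T| = [G : H]`, it is a transversal of `H`, i.e. `G = H T`. Since `T ≤ f(H)`, this
transversal also lies in `f(H)`, which forces `[f(H) : H ∩ f(H)] = p`. If `K ≤ H ∩ f(H)` is normal
in `f(H)`, then conjugating by `g = h t` gives `g K g⁻¹ = h K h⁻¹`, so the normal closure `N` of `K`
in `G` is generated by the `H`-conjugates of `K`. Hence `N ≤ H`, and `N` is `f`-invariant because
`f (h k h⁻¹) = f(h) f(k) f(h)⁻¹ ∈ K`. Simplicity of `f` gives `N = 1`, so `K = 1`.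
-/

open Subgroup Pointwise

section

variable {G : Type*} [Group G] {H K L : Subgroup G}

theorem Subgroup.disjoint_of_prime_card_of_not_le (hK : (Nat.card K).Prime) (hKH : ¬K ≤ H) :
    Disjoint H K := by
  have : Fact (Nat.card K).Prime := ⟨hK⟩
  rcases (H.subgroupOf K).eq_bot_or_eq_top_of_prime_card with h | h
  · exact subgroupOf_eq_bot.mp h
  · exact absurd (subgroupOf_eq_top.mp h) hKH

theorem Subgroup.relIndex_eq_card_of_disjoint (hHK : Disjoint H K) :
    H.relIndex K = Nat.card K := by
  rw [relIndex, subgroupOf_eq_bot.mpr hHK, index_bot]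

theorem Subgroup.relIndex_eq_index_of_disjoint_of_le (hHK : Disjoint H K)
    (hK : Nat.card K = H.index) (hH : H.index ≠ 0) (hKL : K ≤ L) :
    H.relIndex L = H.index := by
  have hL : H.relIndex L ≠ 0 := fun h0 => hH (index_eq_zero_of_relIndex_eq_zero h0)
  refine le_antisymm ?_ ?_
  · simpa only [relIndex_top_right] using relIndex_le_of_le_right le_top (H.relIndex_top_right ▸ hH)
  · calc H.index = H.relIndex K := by rw [relIndex_eq_card_of_disjoint hHK, hK]
      _ ≤ H.relIndex L := relIndex_le_of_le_right hKL hL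

theorem Subgroup.mul_eq_univ_of_disjoint (hHK : Disjoint H K) (hK : Nat.card K = H.index)
    (hH : H.index ≠ 0) : (H : Set G) * (K : Set G) = Set.univ := by
  have : Finite (G ⧸ H) := Nat.finite_of_card_ne_zero hH
  have hinj : Function.Injective fun k : K => ((k : G) : G ⧸ H) := by
    intro k₁ k₂ h
    have hmem : (k₁ : G)⁻¹ * k₂ ∈ H := QuotientGroup.eq.mp h
    exact Subtype.ext (inv_mul_eq_one.mp
      (disjoint_def.mp hHK hmem (K.mul_mem (K.inv_mem k₁.2) k₂.2)))
  have hsurj := ((Nat.bijective_iff_injective_and_card _).mpr ⟨hinj, hK⟩).2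
  refine Set.eq_univ_of_forall fun g => ?_
  obtain ⟨k, hk⟩ := hsurj (g⁻¹ : G)
  exact Set.mem_mul.mpr ⟨((k : G)⁻¹ * g⁻¹)⁻¹, H.inv_mem (QuotientGroup.eq.mp hk),
    (k : G)⁻¹, K.inv_mem k.2, by group⟩

theorem MonoidHom.restrict_mem_of_mem_closure (f : H →* G) {S : Set G}
    (hS : ∀ s ∈ S, ∃ hs : s ∈ H, f ⟨s, hs⟩ ∈ L) {k : G} (hk : k ∈ H) (hkS : k ∈ closure S) :
    f ⟨k, hk⟩ ∈ L := by
  have hle : closure S ≤ (L.comap f).map H.subtype := (closure_le _).mpr fun s hs =>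
    let ⟨hsH, hfs⟩ := hS s hs
    ⟨⟨s, hsH⟩, hfs, rfl⟩
  obtain ⟨⟨k', hk'⟩, hfk', rfl⟩ := hle hkS
  exact hfk'

section Transversal

variable (hHL : (H : Set G) * (L : Set G) = Set.univ) (hLK : ∀ x ∈ L, ∀ k ∈ K, x * k * x⁻¹ ∈ K)
include hHL hLK

theorem Subgroup.exists_conj_eq_of_mul_eq_univ (g : G) {k : G} (hk : k ∈ K) :
    ∃ h ∈ H, ∃ k' ∈ K, g * k * g⁻¹ = h * k' * h⁻¹ := by
  obtain ⟨h, hh, l, hl, rfl⟩ := Set.mem_mul.mp (hHL ▸ Set.mem_univ g)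
  exact ⟨h, hh, l * k * l⁻¹, hLK l hl k hk, by group⟩

theorem Subgroup.normalClosure_le_of_mul_eq_univ (hKH : K ≤ H) : normalClosure (K : Set G) ≤ H := by
  refine (closure_le _).mpr fun x hx => ?_
  obtain ⟨k, hk, hconj⟩ := Group.mem_conjugatesOfSet_iff.mp hx
  obtain ⟨c, rfl⟩ := isConj_iff.mp hconj
  obtain ⟨h, hh, k', hk', hck⟩ := exists_conj_eq_of_mul_eq_univ hHL hLK c hk
  rw [SetLike.mem_coe, hck]
  exact H.mul_mem (H.mul_mem hh (hKH hk')) (H.inv_mem hh)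

theorem Subgroup.map_mem_normalClosure_of_mul_eq_univ (f : H →* G) (hKH : K ≤ H)
    (hfK : ∀ k (hk : k ∈ H), k ∈ K → f ⟨k, hk⟩ ∈ K)
    (hRK : ∀ x ∈ f.range, ∀ k ∈ K, x * k * x⁻¹ ∈ K) {k : G} (hk : k ∈ H)
    (hkN : k ∈ normalClosure (K : Set G)) : f ⟨k, hk⟩ ∈ normalClosure (K : Set G) := by
  refine f.restrict_mem_of_mem_closure (fun x hx => ?_) hk hkN
  obtain ⟨y, hy, hconj⟩ := Group.mem_conjugatesOfSet_iff.mp hx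
  obtain ⟨c, rfl⟩ := isConj_iff.mp hconj
  obtain ⟨h, hh, k', hk', hck⟩ := exists_conj_eq_of_mul_eq_univ hHL hLK c hy
  have hk'H : k' ∈ H := hKH hk'
  have hxH : c * y * c⁻¹ ∈ H := hck ▸ H.mul_mem (H.mul_mem hh hk'H) (H.inv_mem hh)
  have hconjH : (⟨c * y * c⁻¹, hxH⟩ : H) = ⟨h, hh⟩ * ⟨k', hk'H⟩ * (⟨h, hh⟩ : H)⁻¹ :=
    Subtype.ext hck
  refine ⟨hxH, ?_⟩
  rw [hconjH, map_mul, map_mul, map_inv]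
  exact le_normalClosure (hRK _ ⟨_, rfl⟩ _ (hfK k' hk'H hk'))

end Transversal

end

/-- Lemma 2.5: if `f : H → G` is a simple virtual endomorphism of
degree `p` and there is an element `a` of order `p` in `f(H) \ H`, then the
restriction of `f` to `H ∩ f(H)` is a simple virtual endomorphism of `f(H)` of
degree `p`: `[f(H) : H ∩ f(H)] = p`, and every subgroup `K ≤ H ∩ f(H)` that is
normal in `f(H)` and `f`-invariant is trivial. -/
theorem stmt2 (p : ℕ) (hp : p.Prime) (G : Type*) [Group G]
    (H : Subgroup G) (hidx : H.index = p) (f : H →* G)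
    (hsimple : ∀ K : Subgroup G, K ≤ H → K.Normal →
      (∀ k (hk : k ∈ H), k ∈ K → f ⟨k, hk⟩ ∈ K) → K = ⊥)
    (a : G) (ha : a ∈ f.range) (hanotH : a ∉ H) (haord : orderOf a = p) :
    H.relIndex f.range = p ∧
      ∀ K : Subgroup G, K ≤ H ⊓ f.range →
        (∀ x ∈ f.range, ∀ k ∈ K, x * k * x⁻¹ ∈ K) →
        (∀ k (hk : k ∈ H), k ∈ K → f ⟨k, hk⟩ ∈ K) → K = ⊥ := by
  have hH : H.index ≠ 0 := hidx ▸ hp.ne_zero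
  have hT : Nat.card (zpowers a) = H.index := by rw [Nat.card_zpowers, haord, hidx]
  have hTf : zpowers a ≤ f.range := zpowers_le.mpr ha
  have hdisj : Disjoint H (zpowers a) :=
    disjoint_of_prime_card_of_not_le (by rwa [hT, hidx]) (zpowers_le.not.mpr hanotH)
  refine ⟨hidx ▸ relIndex_eq_index_of_disjoint_of_le hdisj hT hH hTf, fun K hK hRK hfK => ?_⟩
  have hHT := mul_eq_univ_of_disjoint hdisj hT hH
  have hTK : ∀ x ∈ zpowers a, ∀ k ∈ K, x * k * x⁻¹ ∈ K := fun x hx => hRK x (hTf hx)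
  have hKH : K ≤ H := hK.trans inf_le_left
  have hN : normalClosure (K : Set G) = ⊥ :=
    hsimple _ (normalClosure_le_of_mul_eq_univ hHT hTK hKH) normalClosure_normal
      fun _ => map_mem_normalClosure_of_mul_eq_univ hHT hTK f hKH hfK hRK
  exact le_bot_iff.mp (hN ▸ le_normalClosure)
end

section
/- Let G be a group, H a normal subgroup of index p, f : H → G a simple virtual endomorphism, and suppose the set {g ∈ G | g^{p^n} = 1} is a subgroup of G that intersects H trivially. If additionally G = H × ⟨a⟩ with a of order p (the extension splits as a direct product), then H^p is an f-invariant normal subgroup of G, hence H^p = 1 and G has exponent p. -/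
/-! The subgroup `G^p` generated by `p`-th powers is characteristic in `G`, and every
homomorphism maps `H^p` into `G^p`. In `G = H × ⟨a⟩` with `a^p = 1` we have `(h a^m)^p = h^p`,
so `G^p = H^p`: it is a normal subgroup of `G` inside `H`, and `f` maps it into `G^p = H^p`.
Simplicity of `f` forces `G^p = 1`. -/

open Subgroup

section

variable {G G' : Type*} [Group G] [Group G']

variable (G) in
def powerSubgroup (n : ℕ) : Subgroup G :=
  closure (Set.range fun g : G => g ^ n)

namespace powerSubgroup

variable {n : ℕ}

theorem pow_mem (g : G) : g ^ n ∈ powerSubgroup G n :=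
  subset_closure ⟨g, rfl⟩

theorem map_le (φ : G →* G') : (powerSubgroup G n).map φ ≤ powerSubgroup G' n := by
  rw [powerSubgroup, MonoidHom.map_closure, closure_le]
  rintro _ ⟨_, ⟨g, rfl⟩, rfl⟩
  rw [SetLike.mem_coe, map_pow]
  exact pow_mem (φ g)

instance characteristic : (powerSubgroup G n).Characteristic :=
  characteristic_iff_map_le.2 fun φ => map_le φ.toMonoidHom

theorem eq_bot_iff_forall_pow_eq_one : powerSubgroup G n = ⊥ ↔ ∀ g : G, g ^ n = 1 := by
  simp only [powerSubgroup, closure_eq_bot_iff, Set.range_subset_iff, Set.mem_singleton_iff]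

theorem eq_map_subtype {H : Subgroup G} (hpow : ∀ g : G, ∃ h ∈ H, g ^ n = h ^ n) :
    powerSubgroup G n = (powerSubgroup H n).map H.subtype := by
  refine le_antisymm ?_ (map_le H.subtype)
  rw [powerSubgroup, closure_le]
  rintro _ ⟨g, rfl⟩
  obtain ⟨h, hH, hg⟩ := hpow g
  exact ⟨⟨h, hH⟩ ^ n, pow_mem _, hg.symm⟩

end powerSubgroup

theorem exists_mem_pow_eq_pow_of_sup_zpowers {H : Subgroup G} [H.Normal] {a : G} {n : ℕ}
    (han : a ^ n = 1) (hsup : H ⊔ zpowers a = ⊤) (hcomm : ∀ h ∈ H, Commute h a) (g : G) :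
    ∃ h ∈ H, g ^ n = h ^ n := by
  obtain ⟨h, hH, _, ⟨m, rfl⟩, rfl⟩ := mem_sup_of_normal_left.1 (hsup ▸ mem_top g)
  refine ⟨h, hH, ?_⟩
  have ham : (a ^ m) ^ n = 1 := by
    rw [← zpow_natCast, ← zpow_mul, mul_comm, zpow_mul, zpow_natCast, han, one_zpow]
  rw [((hcomm h hH).zpow_right m).mul_pow, ham, mul_one]

end

theorem stmt4_general (p : ℕ) (G : Type*) [Group G]
    (H : Subgroup G) [H.Normal]
    (f : H →* G)
    (hsimple : ∀ K : Subgroup G, K ≤ H → K.Normal →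
      (∀ k (hk : k ∈ H), k ∈ K → f ⟨k, hk⟩ ∈ K) → K = ⊥)
    (a : G) (haord : orderOf a = p)
    (hsup : H ⊔ Subgroup.zpowers a = ⊤)
    (hcomm : ∀ h ∈ H, Commute h a) :
    (∀ h : H, (h : G) ^ p = 1) ∧ ∀ g : G, g ^ p = 1 := by
  have hK := powerSubgroup.eq_map_subtype
    (exists_mem_pow_eq_pow_of_sup_zpowers (haord ▸ pow_orderOf_eq_one a) hsup hcomm)
  have hKH : powerSubgroup G p ≤ H := hK ▸ map_subtype_le _
  have hfinv : ∀ k (hk : k ∈ H), k ∈ powerSubgroup G p → f ⟨k, hk⟩ ∈ powerSubgroup G p := by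
    rintro _ hk hkK
    obtain ⟨y, hy, rfl⟩ := hK ▸ hkK
    exact powerSubgroup.map_le f ⟨y, hy, rfl⟩
  have hexp := powerSubgroup.eq_bot_iff_forall_pow_eq_one.1 (hsimple _ hKH inferInstance hfinv)
  exact ⟨fun h => hexp h, hexp⟩

/-- base case of the induction in Theorem 1: if `f : H → G` is a
simple virtual endomorphism of degree `p`, the set of `p^n`-torsion elements is
a subgroup meeting `H` trivially, and `G = H × ⟨a⟩` with `a` of order `p`, then
`H^p = 1` and `G` has exponent `p`. -/
theorem stmt4 (p : ℕ) (hp : p.Prime) (G : Type*) [Group G] [Finite G]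
    (hG : IsPGroup p G) (H : Subgroup G) [H.Normal] (hidx : H.index = p)
    (f : H →* G)
    (hsimple : ∀ K : Subgroup G, K ≤ H → K.Normal →
      (∀ k (hk : k ∈ H), k ∈ K → f ⟨k, hk⟩ ∈ K) → K = ⊥)
    (n : ℕ) (Ω : Subgroup G) (hΩ : (Ω : Set G) = {g : G | g ^ p ^ n = 1})
    (hΩH : Ω ⊓ H = ⊥)
    (a : G) (haord : orderOf a = p)
    (hsup : H ⊔ Subgroup.zpowers a = ⊤) (hinf : H ⊓ Subgroup.zpowers a = ⊥)
    (hcomm : ∀ h ∈ H, Commute h a) :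
    (∀ h : H, (h : G) ^ p = 1) ∧ ∀ g : G, g ^ p = 1 :=
  stmt4_general p G H f hsimple a haord hsup hcomm
end

section
/- Let G be an extraspecial p-group of exponent p and order at least p^5. Then G admits no simple virtual endomorphism of degree p: for every maximal subgroup H of G and every homomorphism f : H → G, there exists a nontrivial subgroup K of H that is normal in G and satisfies f(K) ≤ K. (Indeed K = [H,H] = [G,G] works.) -/
/-!
All commutators of `G` are central, so for an abelian maximal subgroup `H` and `g ∉ H` the map
`h ↦ ⁅h, g⁆` is a homomorphism `H → Z(G)` whose kernel commutes with `H` and `g`, hence with all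
of `G`. Thus `|H| ≤ |Z(G)|² = p²`, which is impossible since `|H| ≥ p⁴`. So `⁅H, H⁆` is a
nontrivial subgroup of `Z(G)`, which has prime order: `⁅H, H⁆ = Z(G) = [G, G]`. This subgroup is
normal, and `f` maps it into `[f H, f H] ≤ [G, G]`.
-/

open scoped commutatorElement

namespace Subgroup

variable {G : Type*} [Group G]

theorem isCoatom_of_index_prime {H : Subgroup G} (hH : H.index.Prime) : IsCoatom H := by
  refine ⟨fun h => hH.one_lt.ne' (index_eq_one.mpr h), fun K hHK => ?_⟩
  rcases hH.eq_one_or_self_of_dvd _ (index_dvd_of_le hHK.le) with hK | hK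
  · exact index_eq_one.mp hK
  · have hrel := relIndex_mul_index hHK.le
    rw [hK, mul_eq_right₀ hH.ne_zero] at hrel
    exact absurd (relIndex_eq_one.mp hrel) hHK.not_ge

theorem mem_center_of_isCoatom {H : Subgroup G} (hmax : IsCoatom H) (hcomm : H ≤ centralizer H)
    {x g : G} (hx : x ∈ H) (hg : g ∉ H) (hxg : Commute x g) : x ∈ center G := by
  have hH : H ≤ centralizer {x} := fun y hy =>
    mem_centralizer_singleton_iff.mpr (hcomm hy x hx).symm
  have htop : centralizer {x} = ⊤ :=
    hmax.lt_iff.mp (SetLike.lt_iff_le_and_exists.mpr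
      ⟨hH, g, mem_centralizer_singleton_iff.mpr hxg.eq.symm, hg⟩)
  exact mem_center_iff.mpr fun y =>
    mem_centralizer_singleton_iff.mp (htop ▸ mem_top y)

def commutatorElementLeftHom (hG : _root_.commutator G ≤ center G) (g : G) : G →* G where
  toFun x := ⁅x, g⁆
  map_one' := commutatorElement_one_left g
  map_mul' x y := by
    have hcentral : ∀ a b : G, ⁅a, b⁆ ∈ center G := fun a b =>
      hG (commutator_mem_commutator (mem_top a) (mem_top b))
    rw [commutatorElement_mul_left_eq_conj_mul, mem_center_iff.mp (hcentral y g) x,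
      mul_inv_cancel_right]
    exact mem_center_iff.mp (hcentral x g) _

theorem card_le_card_center_sq [Finite G] (hG : _root_.commutator G ≤ center G) {H : Subgroup G}
    (hmax : IsCoatom H) (hcomm : H ≤ centralizer H) :
    Nat.card H ≤ Nat.card (center G) ^ 2 := by
  obtain ⟨g, hg⟩ : ∃ g, g ∉ H := by
    by_contra! h
    exact hmax.1 (eq_top_iff' H |>.mpr h)
  set φ := (commutatorElementLeftHom hG g).domRestrict H
  have hrange : Nat.card φ.range ≤ Nat.card (center G) := by
    refine card_le_of_le ?_
    rintro _ ⟨x, rfl⟩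
    exact hG (commutator_mem_commutator (mem_top _) (mem_top g))
  have hker : Nat.card φ.ker ≤ Nat.card (center G) := by
    rw [← card_map_of_injective H.subtype_injective]
    refine card_le_of_le ?_
    rintro _ ⟨x, hx, rfl⟩
    exact mem_center_of_isCoatom hmax hcomm x.2 hg
      (commutatorElement_eq_one_iff_commute.mp hx)
  calc Nat.card H = Nat.card φ.ker * Nat.card φ.range := by
        rw [← index_ker, card_mul_index]
    _ ≤ Nat.card (center G) ^ 2 := by rw [sq]; exact Nat.mul_le_mul hker hrange

theorem eq_of_le_of_ne_bot_of_card_prime [Finite G] {K L : Subgroup G} (hKL : K ≤ L)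
    (hK : K ≠ ⊥) (hL : (Nat.card L).Prime) : K = L := by
  refine eq_of_le_of_card_ge hKL ?_
  rcases hL.eq_one_or_self_of_dvd _ (card_dvd_of_le hKL) with h | h
  · exact absurd (card_eq_one.mp h) hK
  · exact h.ge

theorem commutator_eq_center_of_index_prime [Finite G] (hcenter : center G = _root_.commutator G)
    (hprime : (Nat.card (center G)).Prime) {H : Subgroup G} (hidx : H.index.Prime)
    (hcard : Nat.card (center G) ^ 2 < Nat.card H) : ⁅H, H⁆ = center G := by
  refine eq_of_le_of_ne_bot_of_card_prime ?_ ?_ hprime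
  · exact hcenter ▸ commutator_mono le_top le_top
  · rw [Ne, commutator_eq_bot_iff_le_centralizer]
    exact fun hcomm => hcard.not_ge <|
      card_le_card_center_sq hcenter.ge (isCoatom_of_index_prime hidx) hcomm

end Subgroup

theorem map_commutator_le_commutator {G G' : Type*} [Group G] [Group G'] (f : G →* G') :
    (commutator G).map f ≤ commutator G' :=
  map_commutator_eq G f ▸ Subgroup.commutator_mono le_top le_top

open Subgroup

theorem stmt9_general (p : ℕ) (hp : p.Prime) (G : Type*) [Group G] [Finite G]
    (hcenter : Subgroup.center G = commutator G)
    (hcard : Nat.card (Subgroup.center G) = p)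
    (horder : p ^ 5 ≤ Nat.card G)
    (H : Subgroup G) (hidx : H.index = p) (f : H →* G) :
    ∃ K : Subgroup G, K ≠ ⊥ ∧ K ≤ H ∧ K.Normal ∧
      ∀ k (hk : k ∈ H), k ∈ K → f ⟨k, hk⟩ ∈ K := by
  have hlarge : Nat.card (center G) ^ 2 < Nat.card H := by
    have hGH : Nat.card H * p = Nat.card G := hidx ▸ card_mul_index H
    calc Nat.card (center G) ^ 2 = p ^ 2 := by rw [hcard]
      _ < p ^ 4 := Nat.pow_lt_pow_right hp.one_lt (by norm_num)
      _ ≤ Nat.card H := Nat.le_of_mul_le_mul_right (by rwa [← pow_succ, hGH]) hp.pos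
  have hK : ⁅H, H⁆ = center G :=
    commutator_eq_center_of_index_prime hcenter (hcard ▸ hp) (hidx ▸ hp) hlarge
  refine ⟨⁅H, H⁆, ?_, H.commutator_le_self, hK ▸ inferInstance, fun k hk hkK => ?_⟩
  · rw [hK, Ne, ← card_eq_one, hcard]
    exact hp.one_lt.ne'
  · rw [← H.map_subtype_commutator] at hkK
    obtain ⟨x, hx, rfl⟩ := hkK
    rw [hK, hcenter]
    exact map_commutator_le_commutator f (mem_map_of_mem f hx)

/-- an extraspecial `p`-group of exponent `p` and order at least
`p^5` admits no simple virtual endomorphism of degree `p`: for every maximal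
subgroup `H` and every homomorphism `f : H → G` there is a nontrivial subgroup
`K ≤ H`, normal in `G`, with `f(K) ≤ K`. -/
theorem stmt9 (p : ℕ) (hp : p.Prime) (G : Type*) [Group G] [Finite G]
    (hG : IsPGroup p G)
    (hcenter : Subgroup.center G = commutator G)
    (hcard : Nat.card (Subgroup.center G) = p)
    (hexp : ∀ g : G, g ^ p = 1)
    (horder : p ^ 5 ≤ Nat.card G)
    (H : Subgroup G) (hidx : H.index = p) (f : H →* G) :
    ∃ K : Subgroup G, K ≠ ⊥ ∧ K ≤ H ∧ K.Normal ∧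
      ∀ k (hk : k ∈ H), k ∈ K → f ⟨k, hk⟩ ∈ K :=
  stmt9_general p hp G hcenter hcard horder H hidx f
end

section
/- Let G be a group with a subgroup H of index p and f : H → G a homomorphism, and suppose G = H ⋊ ⟨a⟩ with a ∈ f(H) \ H of order p. If K ≤ H ∩ f(H) is normal in f(H) with f(K) ≤ K, then K ≤ (f⁻¹(K))^g for every g ∈ G, where f⁻¹(K) = {h ∈ H | f(h) ∈ K}. -/
/-!
Write `g = h b` with `h ∈ H` and `b` in a subgroup of `f(H)` complementing `H`. Conjugation by
`b ∈ f(H)` keeps `K` inside `K`, hence inside `f⁻¹(K)` because `f(K) ≤ K`; conjugation by `h`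
then stays inside `f⁻¹(K)`, which is normal in `H` because `f(H)` normalizes `K`.
-/

namespace Subgroup

variable {G : Type*} [Group G] {H K : Subgroup G} {f : H →* G}

theorem comap_normal_of_range_conj_mem (hK : ∀ x ∈ f.range, ∀ k ∈ K, x * k * x⁻¹ ∈ K) :
    (K.comap f).Normal :=
  ⟨fun n hn h => by simpa using hK (f h) ⟨h, rfl⟩ (f n) hn⟩

theorem conj_mem_map_comap_of_mem (hK : ∀ x ∈ f.range, ∀ k ∈ K, x * k * x⁻¹ ∈ K)
    {h : G} (hh : h ∈ H) {k : G} (hk : k ∈ (K.comap f).map H.subtype) :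
    h * k * h⁻¹ ∈ (K.comap f).map H.subtype := by
  obtain ⟨n, hn, rfl⟩ := hk
  exact ⟨⟨h, hh⟩ * n * ⟨h, hh⟩⁻¹, (comap_normal_of_range_conj_mem hK).conj_mem n hn _, rfl⟩

theorem le_map_comap_of_map_mem (hKH : K ≤ H) (hfK : ∀ k (hk : k ∈ H), k ∈ K → f ⟨k, hk⟩ ∈ K) :
    K ≤ (K.comap f).map H.subtype :=
  fun k hk => ⟨⟨k, hKH hk⟩, hfK k (hKH hk) hk, rfl⟩

theorem conj_mem_map_comap_of_sup_eq_top [H.Normal] {M : Subgroup G} (hM : M ≤ f.range)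
    (hsup : H ⊔ M = ⊤) (hKH : K ≤ H) (hK : ∀ x ∈ f.range, ∀ k ∈ K, x * k * x⁻¹ ∈ K)
    (hfK : ∀ k (hk : k ∈ H), k ∈ K → f ⟨k, hk⟩ ∈ K) (g : G) {k : G} (hk : k ∈ K) :
    g * k * g⁻¹ ∈ (K.comap f).map H.subtype := by
  have hg : g ∈ ((H ⊔ M : Subgroup G) : Set G) := by simp [hsup]
  rw [normal_mul] at hg
  obtain ⟨h, hh, b, hb, rfl⟩ := hg
  have hbk : b * k * b⁻¹ ∈ K := hK b (hM hb) k hk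
  have hconj : h * b * k * (h * b)⁻¹ = h * (b * k * b⁻¹) * h⁻¹ := by group
  rw [hconj]
  exact conj_mem_map_comap_of_mem hK hh (le_map_comap_of_map_mem hKH hfK hbk)

end Subgroup

theorem stmt10_general (G : Type*) [Group G]
    (H : Subgroup G) [H.Normal] (f : H →* G)
    (a : G) (ha : a ∈ f.range)
    (hsup : H ⊔ Subgroup.zpowers a = ⊤)
    (K : Subgroup G) (hKle : K ≤ H ⊓ f.range)
    (hKnormal : ∀ x ∈ f.range, ∀ k ∈ K, x * k * x⁻¹ ∈ K)
    (hKinv : ∀ k (hk : k ∈ H), k ∈ K → f ⟨k, hk⟩ ∈ K) :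
    ∀ g : G, ∀ k ∈ K, g * k * g⁻¹ ∈ (K.comap f).map H.subtype :=
  fun g _ hk => Subgroup.conj_mem_map_comap_of_sup_eq_top (Subgroup.zpowers_le.mpr ha) hsup
    (fun _ hk => (hKle hk).1) hKnormal hKinv g hk

/-- key step of Lemma 2.5: suppose `G = H ⋊ ⟨a⟩` with `H` of
index `p`, `a ∈ f(H) \ H` of order `p`. If `K ≤ H ∩ f(H)` is normal in `f(H)`
and `f(K) ≤ K`, then `K ≤ (f⁻¹(K))^g` for every `g ∈ G`. -/
theorem stmt10 (p : ℕ) (hp : p.Prime) (G : Type*) [Group G]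
    (H : Subgroup G) [H.Normal] (hidx : H.index = p) (f : H →* G)
    (a : G) (ha : a ∈ f.range) (hanotH : a ∉ H) (haord : orderOf a = p)
    (hsup : H ⊔ Subgroup.zpowers a = ⊤)
    (K : Subgroup G) (hKle : K ≤ H ⊓ f.range)
    (hKnormal : ∀ x ∈ f.range, ∀ k ∈ K, x * k * x⁻¹ ∈ K)
    (hKinv : ∀ k (hk : k ∈ H), k ∈ K → f ⟨k, hk⟩ ∈ K) :
    ∀ g : G, ∀ k ∈ K, g * k * g⁻¹ ∈ (K.comap f).map H.subtype :=
  stmt10_general G H f a ha hsup K hKle hKnormal hKinv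
end

section
/- Let G be a group with a simple virtual endomorphism f : H → G of degree p. If H^{p^n} = 1 (every element of H has order dividing p^n), then any characteristic subgroup of H contained in ker f and normal in G must be trivial; in particular, H^{p^n} being contained in ker f and normal in G forces H^{p^n} = 1 whenever f(H)^{p^n} = 1. -/
/-!
A subgroup `K ≤ H` that is normal in `G` and killed by `f` is trivially `f`-invariant, so simplicity
makes it trivial. The subgroup `H^m` generated by the `m`-th powers is characteristic in `H`, hence
normal in `G`, and it lies in `ker f` as soon as `f(H)^m = 1`; so then `H^m = 1`.
-/

namespace Subgroup

variable {G : Type*} [Group G]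

/-- The paper's `G^m`. -/
def powClosure (G : Type*) [Group G] (m : ℕ) : Subgroup G :=
  closure (Set.range fun x : G => x ^ m)

theorem pow_mem_powClosure (m : ℕ) (x : G) : x ^ m ∈ powClosure G m :=
  subset_closure ⟨x, rfl⟩

instance powClosure_characteristic (m : ℕ) : (powClosure G m).Characteristic := by
  refine characteristic_iff_map_le.mpr fun φ => (map_le_iff_le_comap).mpr ?_
  refine closure_le _ |>.mpr ?_
  rintro _ ⟨x, rfl⟩
  simpa using pow_mem_powClosure m (φ x)

theorem powClosure_le_ker {M : Type*} [Group M] {m : ℕ} (f : G →* M)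
    (hf : ∀ y ∈ f.range, y ^ m = 1) : powClosure G m ≤ f.ker := by
  refine closure_le _ |>.mpr ?_
  rintro _ ⟨x, rfl⟩
  simpa using hf (f x) ⟨x, rfl⟩

end Subgroup

open Subgroup

section VirtualEndomorphism

variable {G : Type*} [Group G] {H : Subgroup G}

def IsSimpleVirtualEndomorphism (f : H →* G) : Prop :=
  ∀ K : Subgroup G, K ≤ H → K.Normal → (∀ k (hk : k ∈ H), k ∈ K → f ⟨k, hk⟩ ∈ K) → K = ⊥

namespace IsSimpleVirtualEndomorphism

variable {f : H →* G}

theorem eq_bot_of_forall_eq_one (hf : IsSimpleVirtualEndomorphism f) (K : Subgroup G)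
    (hKH : K ≤ H) (hK : K.Normal) (hker : ∀ k (hk : k ∈ H), k ∈ K → f ⟨k, hk⟩ = 1) : K = ⊥ :=
  hf K hKH hK fun k hk hkK => hker k hk hkK ▸ K.one_mem

theorem eq_bot_of_characteristic_of_le_ker [H.Normal] (hf : IsSimpleVirtualEndomorphism f)
    (L : Subgroup H) [L.Characteristic] (hL : L ≤ f.ker) : L = ⊥ := by
  have hmap : L.map H.subtype = ⊥ :=
    hf.eq_bot_of_forall_eq_one _ (map_subtype_le L) inferInstance fun _ _ ⟨x, hx, hxk⟩ => by
      subst hxk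
      exact hL hx
  exact (map_eq_bot_iff_of_injective L H.subtype_injective).mp hmap

end IsSimpleVirtualEndomorphism

end VirtualEndomorphism

theorem stmt12_general (p : ℕ) (G : Type*) [Group G]
    (H : Subgroup G) [H.Normal]
    (f : H →* G)
    (hsimple : ∀ K : Subgroup G, K ≤ H → K.Normal →
      (∀ k (hk : k ∈ H), k ∈ K → f ⟨k, hk⟩ ∈ K) → K = ⊥)
    (n : ℕ) :
    (∀ K : Subgroup G, K ≤ H → K.Normal →
        (∀ k (hk : k ∈ H), k ∈ K → f ⟨k, hk⟩ = 1) → K = ⊥) ∧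
      ((∀ g ∈ f.range, g ^ p ^ n = 1) → ∀ h ∈ H, h ^ p ^ n = 1) := by
  have hf : IsSimpleVirtualEndomorphism f := hsimple
  refine ⟨hf.eq_bot_of_forall_eq_one, fun hrange h hh => ?_⟩
  have hbot : powClosure H (p ^ n) = ⊥ :=
    hf.eq_bot_of_characteristic_of_le_ker _ (powClosure_le_ker f hrange)
  have hpow := pow_mem_powClosure (p ^ n) (⟨h, hh⟩ : H)
  rw [hbot, mem_bot] at hpow
  exact congrArg Subtype.val hpow

/-- Theorem 2.6: for a simple virtual endomorphism `f : H → G`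
of degree `p` of a finite `p`-group with `H` normal in `G`: any subgroup of `H`
normal in `G` and contained in `ker f` is trivial; in particular, if
`f(H)^{p^n} = 1` then `H^{p^n} = 1`. -/
theorem stmt12 (p : ℕ) (hp : p.Prime) (G : Type*) [Group G] [Finite G]
    (hG : IsPGroup p G) (H : Subgroup G) [H.Normal] (hidx : H.index = p)
    (f : H →* G)
    (hsimple : ∀ K : Subgroup G, K ≤ H → K.Normal →
      (∀ k (hk : k ∈ H), k ∈ K → f ⟨k, hk⟩ ∈ K) → K = ⊥)
    (n : ℕ) :
    (∀ K : Subgroup G, K ≤ H → K.Normal →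
        (∀ k (hk : k ∈ H), k ∈ K → f ⟨k, hk⟩ = 1) → K = ⊥) ∧
      ((∀ g ∈ f.range, g ^ p ^ n = 1) → ∀ h ∈ H, h ^ p ^ n = 1) :=
  stmt12_general p G H f hsimple n
end

section
/- Let G be the Heisenberg group over F_p, with presentation ⟨a, b | [a,b] = c, [a,c] = [b,c] = a^p = b^p = c^p = 1⟩, let H = ⟨a, c⟩ and let f : H → G be the homomorphism determined by a ↦ c, c ↦ b. Then f is a well-defined homomorphism, [G : H] = p, and f is simple: the only subgroup K ≤ H normal in G with f(K) ≤ K is trivial. Hence G is self-similar of degree p. -/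
/-!
`H = ⟨a, c⟩` is the kernel of the `y`-coordinate `G → ZMod p`, so it has index `p`, and on it
`f (x, 0, z) = (0, z, x)`. If `K ≤ H` is `f`-invariant then every `k ∈ K` has `f k ∈ H`, i.e.
`k.z = 0`; if `K` is moreover normal, then `b k b⁻¹ ∈ K` has `z`-coordinate `k.z - k.x`, so
`k.x = 0` as well and `k = 1`.
-/

open scoped commutatorElement

/-- The Heisenberg group over `F_p`: triples `(x, y, z)` with the multiplication
`(x, y, z) * (x', y', z') = (x + x', y + y', z + z' + x * y')`. This is the
group with presentation
`⟨a, b | [a,b] = c, [a,c] = [b,c] = aᵖ = bᵖ = cᵖ = 1⟩`. -/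
@[ext]
structure Heis (p : ℕ) where
  x : ZMod p
  y : ZMod p
  z : ZMod p

namespace Heis

variable {p : ℕ}

instance : Mul (Heis p) :=
  ⟨fun g h => ⟨g.x + h.x, g.y + h.y, g.z + h.z + g.x * h.y⟩⟩

instance : One (Heis p) := ⟨⟨0, 0, 0⟩⟩

instance : Inv (Heis p) := ⟨fun g => ⟨-g.x, -g.y, -g.z + g.x * g.y⟩⟩

@[simp] lemma mul_x (g h : Heis p) : (g * h).x = g.x + h.x := rfl
@[simp] lemma mul_y (g h : Heis p) : (g * h).y = g.y + h.y := rfl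
@[simp] lemma mul_z (g h : Heis p) : (g * h).z = g.z + h.z + g.x * h.y := rfl
@[simp] lemma one_x : (1 : Heis p).x = 0 := rfl
@[simp] lemma one_y : (1 : Heis p).y = 0 := rfl
@[simp] lemma one_z : (1 : Heis p).z = 0 := rfl
@[simp] lemma inv_x (g : Heis p) : g⁻¹.x = -g.x := rfl
@[simp] lemma inv_y (g : Heis p) : g⁻¹.y = -g.y := rfl
@[simp] lemma inv_z (g : Heis p) : g⁻¹.z = -g.z + g.x * g.y := rfl

instance : Group (Heis p) where
  mul_assoc g h k := by ext <;> simp <;> ring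
  one_mul g := by ext <;> simp
  mul_one g := by ext <;> simp
  inv_mul_cancel g := by ext <;> simp

/-- The generator `a`. -/
def a : Heis p := ⟨1, 0, 0⟩

/-- The generator `b`. -/
def b : Heis p := ⟨0, 1, 0⟩

/-- The central element `c = [a, b]`. -/
def c : Heis p := ⁅(a : Heis p), b⁆

end Heis

namespace Heis

variable {p : ℕ}

lemma c_eq : (c : Heis p) = ⟨0, 0, 1⟩ := by
  ext <;> simp [c, a, b, commutatorElement_def]

lemma zpow_eq_of_x_mul_y_eq_zero {g : Heis p} (hg : g.x * g.y = 0) (n : ℤ) :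
    g ^ n = ⟨n * g.x, n * g.y, n * g.z⟩ := by
  induction n using Int.induction_on with
  | zero => ext <;> simp
  | succ n ih =>
    rw [zpow_add_one, ih]
    ext
    · simp only [mul_x]; push_cast; ring
    · simp only [mul_y]; push_cast; ring
    · simp only [mul_z]; push_cast; linear_combination (n : ZMod p) * hg
  | pred n ih =>
    rw [zpow_sub_one, ih]
    ext
    · simp only [mul_x, inv_x]; push_cast; ring
    · simp only [mul_y, inv_y]; push_cast; ring
    · simp only [mul_z, inv_y, inv_z]; push_cast; linear_combination (1 + n : ZMod p) * hg

lemma a_zpow (n : ℤ) : (a : Heis p) ^ n = ⟨n, 0, 0⟩ := by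
  rw [zpow_eq_of_x_mul_y_eq_zero] <;> simp [a]

lemma b_zpow (n : ℤ) : (b : Heis p) ^ n = ⟨0, n, 0⟩ := by
  rw [zpow_eq_of_x_mul_y_eq_zero] <;> simp [b]

lemma c_zpow (n : ℤ) : (c : Heis p) ^ n = ⟨0, 0, n⟩ := by
  rw [c_eq, zpow_eq_of_x_mul_y_eq_zero] <;> simp

lemma commute_c (g : Heis p) : Commute g c := by
  ext <;> simp [c_eq, add_comm]

def yHom : Heis p →* Multiplicative (ZMod p) where
  toFun g := Multiplicative.ofAdd g.y
  map_one' := rfl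
  map_mul' _ _ := rfl

lemma yHom_surjective : Function.Surjective (yHom : Heis p →* _) :=
  fun y => ⟨⟨0, y.toAdd, 0⟩, rfl⟩

lemma closure_a_c_eq_ker_yHom : Subgroup.closure {(a : Heis p), c} = yHom.ker := by
  apply le_antisymm
  · rw [Subgroup.closure_le]
    rintro g (rfl | rfl) <;> simp [yHom, a, c_eq]
  · intro g (hg : g.y = 0)
    have hg_eq : g = a ^ (g.x.cast : ℤ) * c ^ (g.z.cast : ℤ) := by
      ext <;> simp [a_zpow, c_zpow, hg]
    rw [hg_eq]
    exact mul_mem (zpow_mem (Subgroup.subset_closure (by simp)) _)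
      (zpow_mem (Subgroup.subset_closure (by simp)) _)

lemma y_eq_zero_of_mem_closure_a_c {g : Heis p} (hg : g ∈ Subgroup.closure {(a : Heis p), c}) :
    g.y = 0 := by
  rwa [closure_a_c_eq_ker_yHom] at hg

lemma index_closure_a_c : (Subgroup.closure {(a : Heis p), c}).index = p := by
  rw [closure_a_c_eq_ker_yHom, Subgroup.index_ker, MonoidHom.range_eq_top.mpr yHom_surjective,
    Subgroup.card_top, Nat.card_congr Multiplicative.toAdd, Nat.card_zmod]

def virtualEndo : Subgroup.closure {(a : Heis p), c} →* Heis p where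
  toFun g := ⟨0, g.1.z, g.1.x⟩
  map_one' := rfl
  map_mul' g h := by
    ext <;> simp [y_eq_zero_of_mem_closure_a_c h.2]

lemma virtualEndo_apply (g : Subgroup.closure {(a : Heis p), c}) :
    virtualEndo g = ⟨0, g.1.z, g.1.x⟩ := rfl

lemma virtualEndo_a : virtualEndo ⟨a, Subgroup.subset_closure (by simp)⟩ = (c : Heis p) := by
  simp only [virtualEndo_apply, c_eq]; rfl

lemma virtualEndo_c : virtualEndo ⟨c, Subgroup.subset_closure (by simp)⟩ = (b : Heis p) := by
  simp only [virtualEndo_apply, c_eq]; rfl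

lemma eq_virtualEndo {f : Subgroup.closure {(a : Heis p), c} →* Heis p}
    (hfa : f ⟨a, Subgroup.subset_closure (by simp)⟩ = c)
    (hfc : f ⟨c, Subgroup.subset_closure (by simp)⟩ = b) : f = virtualEndo := by
  refine MonoidHom.eq_of_eqOn_dense Subgroup.closure_closure_coe_preimage ?_
  rintro ⟨g, hg⟩ (rfl | rfl : g = a ∨ g = c)
  · exact hfa.trans virtualEndo_a.symm
  · exact hfc.trans virtualEndo_c.symm

lemma z_conj_b (k : Heis p) : (b * k * b⁻¹).z = k.z - k.x := by
  simp only [b, mul_x, mul_z, inv_y, inv_z]; ring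

lemma eq_bot_of_virtualEndo_invariant (K : Subgroup (Heis p))
    (hKH : K ≤ Subgroup.closure {(a : Heis p), c}) (hK : K.Normal)
    (hinv : ∀ k (hk : k ∈ Subgroup.closure {(a : Heis p), c}), k ∈ K → virtualEndo ⟨k, hk⟩ ∈ K) :
    K = ⊥ := by
  have hy : ∀ k ∈ K, k.y = 0 := fun k hk => y_eq_zero_of_mem_closure_a_c (hKH hk)
  have hz : ∀ k ∈ K, k.z = 0 := fun k hk => hy _ (hinv k (hKH hk) hk)
  refine (Subgroup.eq_bot_iff_forall K).mpr fun k hk => ?_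
  have hx : k.x = 0 := by
    have hconj := hz _ (hK.conj_mem k hk b)
    rw [z_conj_b, hz k hk] at hconj
    linear_combination -hconj
  ext
  exacts [hx, hy k hk, hz k hk]

end Heis

open Heis in
/-- Example 2.3: for the Heisenberg group `G` over `F_p`, with
`a, b` its standard generators, `c = [a,b]`, and `H = ⟨a, c⟩`, the relations of
the presentation hold, `[G : H] = p`, and the homomorphism `f : H → G`
determined by `a ↦ c`, `c ↦ b` exists, is unique, and is simple; hence `G` is
self-similar of degree `p`. -/
theorem stmt15 (p : ℕ) :
    -- the relations of the presentation hold
    (a : Heis p) ^ p = 1 ∧ (b : Heis p) ^ p = 1 ∧ (c : Heis p) ^ p = 1 ∧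
    ⁅(a : Heis p), (c : Heis p)⁆ = 1 ∧ ⁅(b : Heis p), (c : Heis p)⁆ = 1 ∧
    -- `H = ⟨a, c⟩` has index `p` and carries a unique homomorphism `f` with
    -- `a ↦ c`, `c ↦ b`, and `f` is simple
    (Subgroup.closure {(a : Heis p), c}).index = p ∧
    ∃! f : (Subgroup.closure {(a : Heis p), c}) →* Heis p,
      f ⟨a, Subgroup.subset_closure (by simp)⟩ = c ∧
      f ⟨c, Subgroup.subset_closure (by simp)⟩ = b ∧
      ∀ K : Subgroup (Heis p), K ≤ Subgroup.closure {(a : Heis p), c} → K.Normal →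
        (∀ k (hk : k ∈ Subgroup.closure {(a : Heis p), c}), k ∈ K → f ⟨k, hk⟩ ∈ K) →
        K = ⊥ := by
  refine ⟨?_, ?_, ?_, commutatorElement_eq_one_iff_commute.mpr (commute_c a),
    commutatorElement_eq_one_iff_commute.mpr (commute_c b), index_closure_a_c,
    ⟨virtualEndo, ⟨virtualEndo_a, virtualEndo_c, eq_bot_of_virtualEndo_invariant⟩,
      fun f ⟨hfa, hfc, _⟩ => eq_virtualEndo hfa hfc⟩⟩
  · rw [← zpow_natCast, a_zpow]; ext <;> simp
  · rw [← zpow_natCast, b_zpow]; ext <;> simp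
  · rw [← zpow_natCast, c_zpow]; ext <;> simp
end

section
/- The infinite dihedral pro-2 group G = Z_2 ⋊ C_2 (the 2-adic integers with C_2 acting by inversion) admits a simple virtual endomorphism of degree 2, but the set {g ∈ G | g^2 = 1} is not a subgroup of G. -/
/-! Writing elements of `ℤ₂ ⋊ C₂` as pairs `(x, c)`, take for `H` the kernel of the parity map
`(x, c) ↦ x mod 2`; it is the image of the injective doubling endomorphism `(x, c) ↦ (2x, c)`,
and `f` is the inverse of doubling. A normal `f`-invariant subgroup `K ≤ H` lies in the image of
every iterate of doubling, so all its elements have translation part divisible by every power of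
2, hence zero. A reflection `(0, σ)` in `K` would then be conjugated by `(1, 1)` to `(2, σ)`, so
`K` is trivial.

The reflections `(x, σ)` are involutions, but the product `(1, σ) (0, σ) = (1, 1)` has
infinite order. -/

/-- The inversion automorphism `x ↦ -x` of `ℤ₂`, written multiplicatively. -/
noncomputable def negAut : MulAut (Multiplicative ℤ_[2]) := MulEquiv.inv (Multiplicative ℤ_[2])

/-- The action of `C₂` on `ℤ₂` by inversion. -/
noncomputable def invAction : Multiplicative (ZMod 2) →* MulAut (Multiplicative ℤ_[2]) :=
  MonoidHom.mk' (fun c => if c.toAdd = 0 then 1 else negAut) (by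
    have hsq : negAut * negAut = 1 := by
      refine MulEquiv.ext fun x => ?_
      simp [negAut]
    have h : ∀ c : ZMod 2, c = 0 ∨ c = 1 := by decide
    have h10 : (1 : ZMod 2) ≠ 0 := by decide
    have h11 : (1 : ZMod 2) + 1 = 0 := by decide
    intro a b
    rcases h a.toAdd with ha | ha <;> rcases h b.toAdd with hb | hb <;>
      simp [toAdd_mul, ha, hb, h10, h11, hsq])

/-- The infinite dihedral pro-2 group `ℤ₂ ⋊ C₂`. -/
def DihedralPro2 : Type :=
  Multiplicative ℤ_[2] ⋊[invAction] Multiplicative (ZMod 2)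

noncomputable instance : Group DihedralPro2 :=
  inferInstanceAs (Group (Multiplicative ℤ_[2] ⋊[invAction] Multiplicative (ZMod 2)))

open SemidirectProduct Multiplicative

theorem eq_zero_of_forall_pow_dvd {α : Type*} [CommMonoidWithZero α] [IsCancelMulZero α]
    [WfDvdMonoid α] {a b : α} (ha : ¬IsUnit a) (h : ∀ n, a ^ n ∣ b) : b = 0 := by
  by_contra hb
  obtain ⟨n, hn⟩ := FiniteMultiplicity.of_not_isUnit ha hb
  exact hn (h (n + 1))

theorem Set.subset_range_iterate {α : Type*} {f : α → α} {s : Set α} (hs : s ⊆ Set.range f)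
    (hf : f ⁻¹' s ⊆ s) (n : ℕ) : s ⊆ Set.range f^[n] := by
  induction n with
  | zero => simp
  | succ n ih =>
    intro x hx
    obtain ⟨y, rfl⟩ := hs hx
    obtain ⟨z, rfl⟩ := ih (hf hx)
    exact ⟨z, Function.iterate_succ_apply' f n z⟩

theorem Subgroup.not_exists_coe_eq_setOf_sq_eq_one {M : Type*} [Group M] {a b : M}
    (ha : a ^ 2 = 1) (hb : b ^ 2 = 1) (hab : (a * b) ^ 2 ≠ 1) :
    ¬ ∃ Ω : Subgroup M, (Ω : Set M) = {g | g ^ 2 = 1} := by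
  rintro ⟨Ω, hΩ⟩
  have mem_iff (g : M) : g ∈ Ω ↔ g ^ 2 = 1 := Set.ext_iff.mp hΩ g
  exact hab ((mem_iff _).mp (Ω.mul_mem ((mem_iff a).mpr ha) ((mem_iff b).mpr hb)))

-- `DihedralPro2` unfolded, so that the `SemidirectProduct` API applies to it directly.
local notation "𝔻" => Multiplicative ℤ_[2] ⋊[invAction] Multiplicative (ZMod 2)

local notation "σ" => ofAdd (1 : ZMod 2)

namespace DihedralPro2

theorem eq_one_or_eq_sigma (c : Multiplicative (ZMod 2)) : c = 1 ∨ c = σ := by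
  revert c; decide

theorem sigma_mul_sigma : σ * σ = 1 := by decide

theorem invAction_sigma (x : Multiplicative ℤ_[2]) : invAction σ x = x⁻¹ := by
  show (if toAdd σ = 0 then 1 else negAut) x = x⁻¹
  simp [negAut]

theorem toZMod_invAction (c : Multiplicative (ZMod 2)) (x : Multiplicative ℤ_[2]) :
    PadicInt.toZMod (toAdd (invAction c x)) = PadicInt.toZMod (toAdd x) := by
  rcases eq_one_or_eq_sigma c with rfl | rfl
  · simp
  · simp [invAction_sigma, CharTwo.neg_eq]

noncomputable def parity : 𝔻 →* Multiplicative (ZMod 2) :=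
  MonoidHom.mk' (fun g => ofAdd (PadicInt.toZMod (toAdd g.left))) fun a b => by
    simp [toZMod_invAction, ← ofAdd_add]

theorem parity_surjective : Function.Surjective parity := fun c =>
  ⟨inl (ofAdd ((toAdd c).val : ℤ_[2])), by simp [parity]⟩

theorem index_ker_parity : parity.ker.index = 2 := by
  rw [Subgroup.index_ker, MonoidHom.range_eq_top.mpr parity_surjective, Subgroup.card_top,
    Nat.card_eq_fintype_card]
  rfl

noncomputable def double : 𝔻 →* 𝔻 :=
  SemidirectProduct.map (powMonoidHom 2) (MonoidHom.id _) fun _ => by ext x; simp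

@[simp]
theorem double_left (g : 𝔻) : (double g).left = g.left ^ 2 := rfl

@[simp]
theorem double_right (g : 𝔻) : (double g).right = g.right := rfl

theorem toAdd_iterate_double_left (n : ℕ) (g : 𝔻) :
    toAdd (double^[n] g).left = 2 ^ n * toAdd g.left := by
  induction n with
  | zero => simp
  | succ n ih =>
    rw [Function.iterate_succ_apply', double_left, toAdd_pow, ih, nsmul_eq_mul, pow_succ]
    push_cast
    ring

theorem double_injective : Function.Injective double := by
  intro g h hgh
  have hleft : (2 : ℤ_[2]) * toAdd g.left = 2 * toAdd h.left := by
    simpa using congrArg (fun g => toAdd g.left) hgh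
  ext
  · exact mul_left_cancel₀ (two_ne_zero (α := ℤ_[2])) hleft
  · simpa using congrArg right hgh

theorem range_double : double.range = parity.ker := by
  ext g
  constructor
  · rintro ⟨h, rfl⟩
    simp only [parity, MonoidHom.mem_ker, MonoidHom.mk'_apply, double_left, toAdd_pow,
      nsmul_eq_mul, map_mul, map_natCast, ZMod.natCast_self, zero_mul]
    rfl
  · intro hg
    obtain ⟨y, hy⟩ : (2 : ℤ_[2]) ∣ toAdd g.left := by
      have : toAdd g.left ∈ RingHom.ker (PadicInt.toZMod : ℤ_[2] →+* ZMod 2) := by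
        simpa [parity] using hg
      rw [PadicInt.ker_toZMod, PadicInt.maximalIdeal_eq_span_p, Ideal.mem_span_singleton] at this
      exact_mod_cast this
    refine ⟨⟨ofAdd y, g.right⟩, ?_⟩
    ext
    · simp [hy]
    · rfl

noncomputable def halve : parity.ker →* 𝔻 :=
  ((MulEquiv.subgroupCongr range_double).symm.trans
    (MonoidHom.ofInjective double_injective).symm).toMonoidHom

theorem double_halve (g : parity.ker) : double (halve g) = g := by
  simp [halve, ← MonoidHom.ofInjective_apply double_injective]

theorem mem_of_double_mem {K : Subgroup 𝔻}
    (hinv : ∀ k (hk : k ∈ parity.ker), k ∈ K → halve ⟨k, hk⟩ ∈ K) {g : 𝔻} (hg : double g ∈ K) :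
    g ∈ K := by
  have hk : double g ∈ parity.ker := range_double ▸ ⟨g, rfl⟩
  have hhalve : halve ⟨double g, hk⟩ = g := double_injective (double_halve _)
  exact hhalve ▸ hinv _ hk hg

theorem left_eq_one_of_mem {K : Subgroup 𝔻} (hKH : K ≤ parity.ker)
    (hinv : ∀ k (hk : k ∈ parity.ker), k ∈ K → halve ⟨k, hk⟩ ∈ K) {g : 𝔻} (hg : g ∈ K) :
    g.left = 1 := by
  have hrange : (K : Set 𝔻) ⊆ Set.range double := by
    rw [← MonoidHom.coe_range, range_double]
    exact hKH
  have hdvd (n : ℕ) : (2 : ℤ_[2]) ^ n ∣ toAdd g.left := by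
    obtain ⟨h, rfl⟩ := Set.subset_range_iterate hrange (fun _ => mem_of_double_mem hinv) n hg
    exact ⟨_, toAdd_iterate_double_left n h⟩
  have h2 : ¬IsUnit (2 : ℤ_[2]) := by exact_mod_cast PadicInt.prime_p.not_isUnit
  exact toAdd.injective (eq_zero_of_forall_pow_dvd h2 hdvd)

theorem eq_bot_of_forall_left_eq_one {K : Subgroup 𝔻} (hN : K.Normal)
    (hK : ∀ g ∈ K, g.left = 1) : K = ⊥ := by
  refine (Subgroup.eq_bot_iff_forall K).mpr fun g hg => ?_
  have hconj := hK _ (hN.conj_mem g hg (inl (ofAdd 1)))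
  rcases eq_one_or_eq_sigma g.right with hr | hr
  · exact SemidirectProduct.ext (hK g hg) hr
  -- conjugating by the unit translation shifts the translation part of a reflection by 2
  · simp only [mul_left, left_inl, right_inl, map_one, hK g hg, MulAut.one_apply, mul_one,
      mul_right, hr, one_mul, inv_left, inv_one, invAction_sigma, inv_inv] at hconj
    rw [← ofAdd_add, ofAdd_eq_one] at hconj
    norm_num at hconj

theorem sq_inl_mul_inr_sigma (x : Multiplicative ℤ_[2]) : (inl x * inr σ : 𝔻) ^ 2 = 1 := by
  ext <;> simp [pow_two, invAction_sigma, sigma_mul_sigma]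

theorem inl_mul_inr_sigma_mul_inr_sigma (x : Multiplicative ℤ_[2]) :
    (inl x * inr σ : 𝔻) * inr σ = inl x := by
  rw [mul_assoc, ← map_mul, sigma_mul_sigma, map_one, mul_one]

theorem sq_inr_sigma : (inr σ : 𝔻) ^ 2 = 1 := by
  rw [← map_pow, pow_two, sigma_mul_sigma, map_one]

theorem sq_inl_ne_one : (inl (ofAdd 1) : 𝔻) ^ 2 ≠ 1 := by
  rw [← map_pow, ← ofAdd_nsmul]
  intro h
  have := congrArg (fun g => toAdd g.left) h
  norm_num at this

theorem eq_bot_of_le_ker_parity_of_halve_mem (K : Subgroup 𝔻) (hKH : K ≤ parity.ker)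
    (hN : K.Normal) (hinv : ∀ k (hk : k ∈ parity.ker), k ∈ K → halve ⟨k, hk⟩ ∈ K) : K = ⊥ :=
  eq_bot_of_forall_left_eq_one hN fun _ hg => left_eq_one_of_mem hKH hinv hg

theorem not_exists_subgroup_coe_eq_setOf_sq_eq_one :
    ¬ ∃ Ω : Subgroup 𝔻, (Ω : Set 𝔻) = {g | g ^ 2 = 1} := by
  refine Subgroup.not_exists_coe_eq_setOf_sq_eq_one (sq_inl_mul_inr_sigma (ofAdd 1)) sq_inr_sigma ?_
  rw [inl_mul_inr_sigma_mul_inr_sigma]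
  exact sq_inl_ne_one

end DihedralPro2

/-- the infinite dihedral pro-2 group `G = ℤ₂ ⋊ C₂` admits a
simple virtual endomorphism of degree 2, yet the set `{g ∈ G | g² = 1}` is not
a subgroup of `G`. -/
theorem stmt19 :
    (∃ (H : Subgroup DihedralPro2) (f : H →* DihedralPro2), H.index = 2 ∧
      ∀ K : Subgroup DihedralPro2, K ≤ H → K.Normal →
        (∀ k (hk : k ∈ H), k ∈ K → f ⟨k, hk⟩ ∈ K) → K = ⊥) ∧
    ¬ ∃ Ω : Subgroup DihedralPro2, (Ω : Set DihedralPro2) = {g | g ^ 2 = 1} := by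
  open DihedralPro2 in
  exact ⟨⟨parity.ker, halve, index_ker_parity, eq_bot_of_le_ker_parity_of_halve_mem⟩,
    not_exists_subgroup_coe_eq_setOf_sq_eq_one⟩
end
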